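/- arXiv:2605.22738 — 2 statements merged into one kernel-verified Lean document; each statement's English description precedes it below -/
import Mathlib

section
/- Let N be a finite set, A ⊆ B ⊆ N, and S ⊆ N. Then the Möbius transform of the interval indicator game 1_{[A,B]} satisfies m_S(1_{[A,B]}) = (−1)^{|(N \ B) ∩ S|} if both A ⊆ S and (B \ A) ∩ S = ∅ hold, and m_S(1_{[A,B]}) = 0 otherwise. -/
open Finset

/-- Möbius transform of a game `ν` on a finite player set:
`m_S(ν) = ∑_{L ⊆ S} (−1)^{|S|−|L|} ν(L)`. -/
noncomputable def moebius {α : Type*} [DecidableEq α] (ν : Finset α → ℝ) (S : Finset α) : ℝ :=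
  ∑ L ∈ S.powerset, (-1 : ℝ) ^ (S.card - L.card) * ν L

lemma sum_neg_one_pow_real {α : Type*} [DecidableEq α] (T : Finset α) :
    ∑ M ∈ T.powerset, (-1 : ℝ) ^ M.card = if T = ∅ then 1 else 0 := by
  by_cases h : T = ∅
  · subst h; simp
  · rw [if_neg h]
    have := Finset.sum_powerset_neg_one_pow_card_of_nonempty
      (Finset.nonempty_iff_ne_empty.2 h) (x := T)
    exact_mod_cast this

/-- Möbius transform of the interval indicator game `1_{[A,B]}` for `A ⊆ B ⊆ N`:
`m_S(1_{[A,B]}) = (−1)^{|(N \ B) ∩ S|}` if `A ⊆ S` and `(B \ A) ∩ S = ∅`, else `0`. -/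
theorem moebius_interval_indicator {α : Type*} [Fintype α] [DecidableEq α]
    (A B S : Finset α) (hAB : A ⊆ B) :
    moebius (fun W => if A ⊆ W ∧ W ⊆ B then (1 : ℝ) else 0) S
      = if A ⊆ S ∧ (B \ A) ∩ S = ∅ then (-1 : ℝ) ^ ((univ \ B) ∩ S).card else 0 := by
  classical
  unfold moebius
  simp only [mul_ite, mul_one, mul_zero]
  rw [Finset.sum_ite, Finset.sum_const_zero, add_zero]
  by_cases hA : A ⊆ S
  · -- bijection L ↦ L \ A onto powerset of T := (B \ A) ∩ S
    set T : Finset α := (B \ A) ∩ S with hT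
    have hTS : T ⊆ S := inter_subset_right
    have hTA : Disjoint T A := by
      refine Finset.disjoint_left.2 fun x hx hxA => ?_
      exact (Finset.mem_sdiff.1 (Finset.mem_inter.1 hx).1).2 hxA
    have key : ∑ L ∈ (S.powerset.filter (fun L => A ⊆ L ∧ L ⊆ B)),
        (-1 : ℝ) ^ (S.card - L.card)
        = ∑ M ∈ T.powerset, (-1 : ℝ) ^ (S.card - A.card) * (-1 : ℝ) ^ M.card := by
      refine Finset.sum_bij' (fun L _ => L \ A) (fun M _ => M ∪ A) ?_ ?_ ?_ ?_ ?_
      · intro L hL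
        rw [Finset.mem_filter, Finset.mem_powerset] at hL
        obtain ⟨hLS, hAL, hLB⟩ := hL
        rw [Finset.mem_powerset]
        intro x hx
        rw [Finset.mem_sdiff] at hx
        exact Finset.mem_inter.2 ⟨Finset.mem_sdiff.2 ⟨hLB hx.1, hx.2⟩, hLS hx.1⟩
      · intro M hM
        rw [Finset.mem_powerset] at hM
        rw [Finset.mem_filter, Finset.mem_powerset]
        refine ⟨Finset.union_subset (hM.trans hTS) hA, Finset.subset_union_right, ?_⟩
        refine Finset.union_subset ?_ hAB
        intro x hx
        exact (Finset.mem_sdiff.1 (Finset.mem_inter.1 (hM hx)).1).1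
      · intro L hL
        rw [Finset.mem_filter, Finset.mem_powerset] at hL
        exact Finset.sdiff_union_of_subset hL.2.1
      · intro M hM
        rw [Finset.mem_powerset] at hM
        show (M ∪ A) \ A = M
        rw [Finset.union_sdiff_right]
        exact Finset.sdiff_eq_self_of_disjoint ((Finset.disjoint_of_subset_left hM hTA))
      · intro L hL
        rw [Finset.mem_filter, Finset.mem_powerset] at hL
        obtain ⟨hLS, hAL, hLB⟩ := hL
        have hALc : A.card ≤ L.card := Finset.card_le_card hAL
        have hLSc : L.card ≤ S.card := Finset.card_le_card hLS
        have hexp : S.card - L.card + 2 * (L \ A).card = S.card - A.card + (L \ A).card := by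
          rw [Finset.card_sdiff_of_subset hAL]; omega
        show (-1 : ℝ) ^ (S.card - L.card) = (-1 : ℝ) ^ (S.card - A.card) * (-1 : ℝ) ^ (L \ A).card
        calc (-1 : ℝ) ^ (S.card - L.card)
            = (-1 : ℝ) ^ (S.card - L.card) * ((-1 : ℝ) ^ 2) ^ (L \ A).card := by
              norm_num
          _ = (-1 : ℝ) ^ (S.card - L.card + 2 * (L \ A).card) := by
              rw [← pow_mul, ← pow_add]
          _ = (-1 : ℝ) ^ (S.card - A.card + (L \ A).card) := by rw [hexp]
          _ = (-1 : ℝ) ^ (S.card - A.card) * (-1 : ℝ) ^ (L \ A).card := pow_add _ _ _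
    rw [key, ← Finset.mul_sum, sum_neg_one_pow_real]
    by_cases hE : T = ∅
    · rw [if_pos hE, if_pos ⟨hA, hE⟩, mul_one]
      have hSB : S ∩ B = A := by
        apply Finset.Subset.antisymm
        · intro x hx
          rw [Finset.mem_inter] at hx
          by_contra hxA
          have : x ∈ T := Finset.mem_inter.2 ⟨Finset.mem_sdiff.2 ⟨hx.2, hxA⟩, hx.1⟩
          simp [hE] at this
        · exact Finset.subset_inter hA hAB
      have h1 : (univ \ B) ∩ S = S \ (S ∩ B) := by
        ext x; simp [Finset.mem_sdiff, Finset.mem_inter]; tauto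
      rw [h1, Finset.card_sdiff_of_subset Finset.inter_subset_left, hSB]
    · rw [if_neg hE, mul_zero, if_neg (by rintro ⟨-, h⟩; exact hE h)]
  · have hfe : (S.powerset.filter (fun L => A ⊆ L ∧ L ⊆ B)) = ∅ :=
      Finset.filter_false_of_mem (fun L hL hcon =>
        hA (hcon.1.trans (Finset.mem_powerset.1 hL)))
    rw [hfe, Finset.sum_empty, if_neg (by rintro ⟨h, -⟩; exact hA h)]
end

section
/- Fix an integer s ≥ 1. There exists a constant C depending only on s such that the following holds for every n ≥ max(s, 2): for every game ν : 2^N → ℝ on N = {1,…,n}, every S ⊆ N with |S| = s, and every m ≥ 1, if T_1,…,T_m are sampled i.i.d. from leverage sampling P(T) = 1/((n+1) · C(n, |T|)), then the MSR estimator of the Shapley interaction index (with weights p_t^s(n) = 1/((n−s+1) · C(n−s, t))) satisfies Var[φ̂_S] ≤ C · ‖ν‖_∞² · log(n) / m when s = 1, and Var[φ̂_S] ≤ C · ‖ν‖_∞² · n^{s−1} / m when s ≥ 2. -/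
open Finset

/-- Expectation of a function of `m` i.i.d. coalitions drawn from the distribution `P`
on `2^N` (players modeled as `Fin n`): the joint sample space is `Fin m → Finset (Fin n)`
with product weights. -/
noncomputable def expec {n m : ℕ} (P : Finset (Fin n) → ℝ)
    (f : (Fin m → Finset (Fin n)) → ℝ) : ℝ :=
  ∑ ω : Fin m → Finset (Fin n), (∏ i, P (ω i)) * f ω

/-- Variance of a function of `m` i.i.d. coalitions drawn from `P`. -/
noncomputable def varFin {n m : ℕ} (P : Finset (Fin n) → ℝ)
    (f : (Fin m → Finset (Fin n)) → ℝ) : ℝ :=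
  expec P fun ω => (f ω - expec P f) ^ 2

/-- Discrete derivative `Δ_S ν(T) = ∑_{L ⊆ S} (−1)^{|S|−|L|} ν(T ∪ L)`. -/
noncomputable def discDeriv {n : ℕ} (ν : Finset (Fin n) → ℝ) (S T : Finset (Fin n)) : ℝ :=
  ∑ L ∈ S.powerset, (-1 : ℝ) ^ (S.card - L.card) * ν (T ∪ L)

/-- Cardinal-probabilistic interaction index
`φ_S(ν) = ∑_{T ⊆ N\S} p_{|T|}^{|S|} Δ_S ν(T)` with interaction weights `p t s`. -/
noncomputable def interIdx {n : ℕ} (p : ℕ → ℕ → ℝ) (ν : Finset (Fin n) → ℝ)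
    (S : Finset (Fin n)) : ℝ :=
  ∑ T ∈ (univ \ S).powerset, p T.card S.card * discDeriv ν S T

/-- The MSR estimator
`φ̂_S(ω) = (1/m) ∑_i ν(T_i) (−1)^{s−|S∩T_i|} p^s_{|T_i|−|S∩T_i|} / P(T_i)`. -/
noncomputable def msr {n : ℕ} (m : ℕ) (ν : Finset (Fin n) → ℝ) (p : ℕ → ℕ → ℝ)
    (S : Finset (Fin n)) (P : Finset (Fin n) → ℝ)
    (ω : Fin m → Finset (Fin n)) : ℝ :=
  (1 / (m : ℝ)) * ∑ i, ν (ω i) * (-1 : ℝ) ^ (S.card - (S ∩ ω i).card)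
      * p ((ω i).card - (S ∩ ω i).card) S.card / P (ω i)

/-- Sup norm `‖ν‖_∞ = max_{T ⊆ N} |ν(T)|`. -/
noncomputable def supNorm {n : ℕ} (ν : Finset (Fin n) → ℝ) : ℝ :=
  Finset.univ.sup' ⟨∅, Finset.mem_univ ∅⟩ fun T => |ν T|


/-- Shapley interaction weight `p_t^s(n) = 1/((n−s+1) C(n−s, t))`. -/
noncomputable def shapW (n t s : ℕ) : ℝ :=
  1 / (((n - s + 1 : ℕ) : ℝ) * (Nat.choose (n - s) t : ℝ))

/-- Leverage-sampling probability `P(T) = 1/((n+1) C(n, |T|))`. -/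
noncomputable def lev (n : ℕ) (T : Finset (Fin n)) : ℝ :=
  1 / (((n + 1 : ℕ) : ℝ) * (Nat.choose n T.card : ℝ))

/-!
Write one summand of the estimator as `g(T) = ν(T) · (±p^s_{|T∖S|}) / P(T)`. Independence of the
samples gives `Var φ̂_S = Var g / m ≤ E[g²] / m ≤ ‖ν‖² · Σ_T (p^s_{|T∖S|})² / P(T) / m`.
Grouping the coalitions by `k = |T ∩ S|` and `j = |T ∖ S|` and using
`C(n, k+j) (j+1)^k (n-s-j+1)^(s-k) ≤ n^s C(n-s, j)`, the weight sum is at most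
`2^s (n+1) n^s / (n-s+1)² · max_k Σ_j 1 / ((j+1)^k (n-s-j+1)^(s-k))`.
For `s ≥ 2` each summand is at most `1/(j+1)² + 1/(n-s-j+1)²`, so the inner sum is at most
`2 ζ(2) < 4`; for `s = 1` it is a harmonic sum, at most `1 + log n`. Finally `n ≤ s (n-s+1)`
turns the prefactor into `2 s² n^(s-1)`.
-/

section Sampling

variable {n m : ℕ} {P : Finset (Fin n) → ℝ}

lemma expec_prod_apply (f : Fin m → Finset (Fin n) → ℝ) :
    expec P (fun ω => ∏ i, f i (ω i)) = ∏ i, ∑ T, P T * f i T := by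
  simp only [expec, ← prod_mul_distrib]
  rw [prod_univ_sum, Fintype.piFinset_univ]

lemma expec_apply (hP : ∑ T, P T = 1) (g : Finset (Fin n) → ℝ) (j : Fin m) :
    expec P (fun ω => g (ω j)) = ∑ T, P T * g T := by
  have h := expec_prod_apply (P := P) fun i T => if i = j then g T else 1
  rw [Fintype.prod_eq_single j fun i hi => by simp [hi, hP]] at h
  simpa using h

lemma expec_apply_mul_apply (hP : ∑ T, P T = 1) (f g : Finset (Fin n) → ℝ) {i j : Fin m}
    (hij : i ≠ j) :
    expec P (fun ω => f (ω i) * g (ω j)) = (∑ T, P T * f T) * ∑ T, P T * g T := by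
  have h := expec_prod_apply (P := P)
    fun k T => if k = i then f T else if k = j then g T else 1
  rw [Fintype.prod_eq_mul i j hij fun k hk => by simp [hk, hP]] at h
  simp only [if_neg hij.symm, ↓reduceIte] at h
  rw [← h]
  congr with ω
  rw [Fintype.prod_eq_mul i j hij fun k hk => by simp [hk]]
  simp [hij.symm]

lemma expec_const_mul (c : ℝ) (f : (Fin m → Finset (Fin n)) → ℝ) :
    expec P (fun ω => c * f ω) = c * expec P f := by
  simp only [expec, mul_sum, mul_left_comm]

lemma expec_sum {ι : Type*} (s : Finset ι) (f : ι → (Fin m → Finset (Fin n)) → ℝ) :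
    expec P (fun ω => ∑ x ∈ s, f x ω) = ∑ x ∈ s, expec P (f x) := by
  simp only [expec, mul_sum]
  exact sum_comm

lemma varFin_mean (hP : ∑ T, P T = 1) (hm : m ≠ 0) (g : Finset (Fin n) → ℝ) :
    varFin P (fun ω : Fin m → Finset (Fin n) => 1 / (m : ℝ) * ∑ i, g (ω i))
      = (∑ T, P T * (g T - ∑ T, P T * g T) ^ 2) / m := by
  have hmean : expec P (fun ω : Fin m → Finset (Fin n) => 1 / (m : ℝ) * ∑ i, g (ω i))
      = ∑ T, P T * g T := by
    simp only [expec_const_mul, expec_sum, expec_apply hP, sum_const, card_univ,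
      Fintype.card_fin, nsmul_eq_mul]
    field_simp
  set μ := ∑ T, P T * g T
  set V := ∑ T, P T * (g T - μ) ^ 2
  have hcov (i j : Fin m) : expec P (fun ω => (g (ω i) - μ) * (g (ω j) - μ))
      = if i = j then V else 0 := by
    split_ifs with hij
    · subst hij
      simp only [← sq]
      exact expec_apply hP (fun T => (g T - μ) ^ 2) i
    · rw [expec_apply_mul_apply hP (fun T => g T - μ) (fun T => g T - μ) hij]
      simp [mul_sub, sum_sub_distrib, ← sum_mul, hP, μ]
  calc varFin P (fun ω : Fin m → Finset (Fin n) => 1 / (m : ℝ) * ∑ i, g (ω i))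
      = expec P (fun ω => (1 / (m : ℝ)) ^ 2 * ∑ i, ∑ j, (g (ω i) - μ) * (g (ω j) - μ)) := by
        rw [varFin, hmean]
        congr with ω
        rw [← sum_mul_sum, sum_sub_distrib]
        simp only [sum_const, card_univ, Fintype.card_fin, nsmul_eq_mul]
        field_simp
    _ = (1 / (m : ℝ)) ^ 2 * ∑ i : Fin m, ∑ j : Fin m, if i = j then V else 0 := by
        simp only [expec_const_mul, expec_sum, hcov]
    _ = V / m := by
        simp only [sum_ite_eq, mem_univ, if_true, sum_const, card_univ, Fintype.card_fin,
          nsmul_eq_mul]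
        field_simp

lemma varFin_mean_le (hP : ∑ T, P T = 1) (hm : m ≠ 0) (g : Finset (Fin n) → ℝ) :
    varFin P (fun ω : Fin m → Finset (Fin n) => 1 / (m : ℝ) * ∑ i, g (ω i))
      ≤ (∑ T, P T * g T ^ 2) / m := by
  rw [varFin_mean hP hm]
  refine div_le_div_of_nonneg_right ?_ m.cast_nonneg
  set μ := ∑ T, P T * g T
  have hexpand (T : Finset (Fin n)) :
      P T * (g T - μ) ^ 2 = P T * g T ^ 2 - 2 * μ * (P T * g T) + μ ^ 2 * P T := by ring
  simp only [hexpand, sum_add_distrib, sum_sub_distrib, ← mul_sum, hP]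
  nlinarith [sq_nonneg μ]

end Sampling

lemma sum_univ_eq_sum_powerset_sum_powerset_compl {α M : Type*} [Fintype α] [DecidableEq α]
    [AddCommMonoid M] (S : Finset α) (F : Finset α → M) :
    ∑ T, F T = ∑ A ∈ S.powerset, ∑ B ∈ Sᶜ.powerset, F (A ∪ B) := by
  have hT (T : Finset α) : S ∩ T ∪ T \ S = T := by grind
  rw [← sum_product']
  refine sum_nbij' (fun T => (S ∩ T, T \ S)) (fun p => p.1 ∪ p.2) ?_ ?_ ?_ ?_ ?_
  · intro T _
    exact mem_product.2 ⟨mem_powerset.2 inter_subset_left,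
      mem_powerset.2 fun x hx => mem_compl.2 (mem_sdiff.1 hx).2⟩
  · simp
  · simp [hT]
  · rintro ⟨A, B⟩ hAB
    simp only [mem_product, mem_powerset, subset_iff, mem_compl] at hAB
    ext x <;> simp <;> grind
  · simp [hT]

lemma sum_apply_card_inter_card_sdiff {α M : Type*} [Fintype α] [DecidableEq α]
    [AddCommMonoid M] (S : Finset α) (f : ℕ → ℕ → M) :
    ∑ T, f #(S ∩ T) #(T \ S)
      = ∑ k ∈ range (#S + 1), (#S).choose k • ∑ j ∈ range (#Sᶜ + 1), (#Sᶜ).choose j • f k j := by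
  rw [sum_univ_eq_sum_powerset_sum_powerset_compl S]
  have hAB {A B : Finset α} (hA : A ⊆ S) (hB : B ⊆ Sᶜ) :
      S ∩ (A ∪ B) = A ∧ (A ∪ B) \ S = B := by
    rw [subset_compl_iff_disjoint_left] at hB
    rw [inter_union_distrib_left, union_sdiff_distrib, inter_eq_right.2 hA,
      disjoint_iff_inter_eq_empty.1 hB, sdiff_eq_empty_iff_subset.2 hA,
      sdiff_eq_self_of_disjoint hB.symm]
    simp
  calc ∑ A ∈ S.powerset, ∑ B ∈ Sᶜ.powerset, f #(S ∩ (A ∪ B)) #((A ∪ B) \ S)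
      = ∑ A ∈ S.powerset, ∑ B ∈ Sᶜ.powerset, f #A #B := by
        refine sum_congr rfl fun A hA => sum_congr rfl fun B hB => ?_
        obtain ⟨h₁, h₂⟩ := hAB (mem_powerset.1 hA) (mem_powerset.1 hB)
        rw [h₁, h₂]
    _ = _ := by
        simp only [sum_powerset_apply_card]
        exact sum_powerset_apply_card fun k => ∑ j ∈ range (#Sᶜ + 1), (#Sᶜ).choose j • f k j

namespace Nat

lemma choose_add_mul_descFactorial_mul_descFactorial {n s k j : ℕ} (hs : s ≤ n) (hk : k ≤ s)
    (hj : j ≤ n - s) :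
    n.choose (k + j) * (k + j).descFactorial k * (n - j - k).descFactorial (s - k)
      = (n - s).choose j * n.descFactorial s := by
  have hL : n.choose (k + j) * (k + j).descFactorial k * (n - j - k).descFactorial (s - k)
      * (j ! * (n - s - j)!) = n ! := by
    have h₁ : j ! * (k + j).descFactorial k = (k + j)! := by
      simpa using factorial_mul_descFactorial (le_add_right k j)
    have h₂ : (n - s - j)! * (n - j - k).descFactorial (s - k) = (n - (k + j))! := by
      rw [show n - (k + j) = n - j - k by omega,
        ← factorial_mul_descFactorial (show s - k ≤ n - j - k by omega),
        show n - j - k - (s - k) = n - s - j by omega]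
    rw [← choose_mul_factorial_mul_factorial (show k + j ≤ n by omega), ← h₁, ← h₂]
    ring
  have hR : (n - s).choose j * n.descFactorial s * (j ! * (n - s - j)!) = n ! := by
    rw [← factorial_mul_descFactorial hs, ← choose_mul_factorial_mul_factorial hj]
    ring
  exact eq_of_mul_eq_mul_right (by positivity) (hL.trans hR.symm)

lemma choose_add_mul_pow_mul_pow_le {n s k j : ℕ} (hs : s ≤ n) (hk : k ≤ s) (hj : j ≤ n - s) :
    n.choose (k + j) * ((j + 1) ^ k * (n - s - j + 1) ^ (s - k))
      ≤ n ^ s * (n - s).choose j := by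
  have h₁ : (j + 1) ^ k ≤ (k + j).descFactorial k := by
    have := pow_sub_le_descFactorial (k + j) k
    rwa [show k + j + 1 - k = j + 1 by omega] at this
  have h₂ : (n - s - j + 1) ^ (s - k) ≤ (n - j - k).descFactorial (s - k) := by
    have := pow_sub_le_descFactorial (n - j - k) (s - k)
    rwa [show n - j - k + 1 - (s - k) = n - s - j + 1 by omega] at this
  calc n.choose (k + j) * ((j + 1) ^ k * (n - s - j + 1) ^ (s - k))
      ≤ n.choose (k + j) * ((k + j).descFactorial k * (n - j - k).descFactorial (s - k)) := by
        gcongr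
    _ = (n - s).choose j * n.descFactorial s := by
        rw [← mul_assoc, choose_add_mul_descFactorial_mul_descFactorial hs hk hj]
    _ ≤ n ^ s * (n - s).choose j := by
        rw [mul_comm]
        gcongr
        exact descFactorial_le_pow n s

end Nat

lemma one_div_pow_mul_pow_le {a b : ℝ} (ha : 1 ≤ a) (hb : 1 ≤ b) {k r : ℕ} (h : 2 ≤ k + r) :
    1 / (a ^ k * b ^ r) ≤ 1 / a ^ 2 + 1 / b ^ 2 := by
  have hmin : 1 ≤ min a b := le_min ha hb
  have hle : min a b ^ 2 ≤ a ^ k * b ^ r :=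
    calc min a b ^ 2 ≤ min a b ^ (k + r) := pow_le_pow_right₀ hmin h
      _ = min a b ^ k * min a b ^ r := pow_add _ _ _
      _ ≤ a ^ k * b ^ r := by gcongr <;> simp
  calc 1 / (a ^ k * b ^ r) ≤ 1 / min a b ^ 2 := one_div_le_one_div_of_le (by positivity) hle
    _ ≤ 1 / a ^ 2 + 1 / b ^ 2 := by
      rcases min_choice a b with hab | hab <;> rw [hab]
      · exact le_add_of_nonneg_right (by positivity)
      · exact le_add_of_nonneg_left (by positivity)

lemma sum_range_one_div_sq_le_two (N : ℕ) : ∑ j ∈ range N, 1 / ((j + 1 : ℕ) : ℝ) ^ 2 ≤ 2 := by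
  have h := sum_Ioo_inv_sq_le (α := ℝ) 0 (N + 1)
  rw [← Ico_add_one_left_eq_Ioo, ← sum_Ico_add' _ 0 N 1, Nat.Ico_zero_eq_range] at h
  simpa using h

lemma sum_range_one_div_le_one_add_log (N : ℕ) :
    ∑ j ∈ range N, 1 / ((j + 1 : ℕ) : ℝ) ≤ 1 + Real.log N := by
  simpa [harmonic] using harmonic_le_one_add_log N

lemma sum_range_succ_reflect {β : Type*} [AddCommMonoid β] (f : ℕ → β) (N : ℕ) :
    ∑ j ∈ range (N + 1), f (N - j) = ∑ j ∈ range (N + 1), f j := by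
  simpa using sum_range_reflect f (N + 1)

lemma sum_one_div_pow_mul_pow_le_four (M : ℕ) {k r : ℕ} (h : 2 ≤ k + r) :
    ∑ j ∈ range (M + 1), 1 / (((j + 1 : ℕ) : ℝ) ^ k * ((M - j + 1 : ℕ) : ℝ) ^ r) ≤ 4 := by
  calc ∑ j ∈ range (M + 1), 1 / (((j + 1 : ℕ) : ℝ) ^ k * ((M - j + 1 : ℕ) : ℝ) ^ r)
      ≤ ∑ j ∈ range (M + 1), (1 / ((j + 1 : ℕ) : ℝ) ^ 2 + 1 / ((M - j + 1 : ℕ) : ℝ) ^ 2) :=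
        sum_le_sum fun j _ => one_div_pow_mul_pow_le (by simp) (by simp) h
    _ = 2 * ∑ j ∈ range (M + 1), 1 / ((j + 1 : ℕ) : ℝ) ^ 2 := by
        rw [sum_add_distrib, sum_range_succ_reflect (fun j => 1 / ((j + 1 : ℕ) : ℝ) ^ 2) M]
        ring
    _ ≤ 4 := by linarith [sum_range_one_div_sq_le_two (M + 1)]

lemma sum_one_div_pow_mul_pow_le_one_add_log (M : ℕ) {k r : ℕ} (h : k + r = 1) :
    ∑ j ∈ range (M + 1), 1 / (((j + 1 : ℕ) : ℝ) ^ k * ((M - j + 1 : ℕ) : ℝ) ^ r)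
      ≤ 1 + Real.log (M + 1 : ℕ) := by
  obtain ⟨rfl, rfl⟩ | ⟨rfl, rfl⟩ : k = 1 ∧ r = 0 ∨ k = 0 ∧ r = 1 := by omega
  · simpa using sum_range_one_div_le_one_add_log (M + 1)
  · have h := sum_range_succ_reflect (fun j => 1 / ((j + 1 : ℕ) : ℝ)) M
    simp only [pow_zero, pow_one, one_mul] at h ⊢
    exact h ▸ sum_range_one_div_le_one_add_log (M + 1)

lemma lev_pos {n : ℕ} (T : Finset (Fin n)) : 0 < lev n T := by
  have : 0 < n.choose #T := Nat.choose_pos (by simpa using card_le_univ T)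
  unfold lev
  positivity

lemma sum_lev (n : ℕ) : ∑ T : Finset (Fin n), lev n T = 1 := by
  simp only [lev]
  rw [← powerset_univ, sum_powerset_apply_card fun t => 1 / (((n + 1 : ℕ) : ℝ) * n.choose t)]
  have hterm : ∀ t ∈ range (n + 1),
      n.choose t • (1 / (((n + 1 : ℕ) : ℝ) * n.choose t)) = 1 / ((n + 1 : ℕ) : ℝ) := by
    intro t ht
    have : (n.choose t : ℝ) ≠ 0 := by
      exact_mod_cast (Nat.choose_pos (Nat.lt_succ_iff.1 (mem_range.1 ht))).ne'
    rw [nsmul_eq_mul]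
    field_simp
  rw [card_univ, Fintype.card_fin, sum_congr rfl hterm, sum_const, card_range, nsmul_eq_mul]
  field_simp

lemma sq_le_supNorm_sq {n : ℕ} (ν : Finset (Fin n) → ℝ) (T : Finset (Fin n)) :
    ν T ^ 2 ≤ supNorm ν ^ 2 := by
  rw [← sq_abs]
  exact pow_le_pow_left₀ (abs_nonneg _) (le_sup' (fun T => |ν T|) (mem_univ T)) 2

noncomputable def msrWeightMoment (n : ℕ) (S : Finset (Fin n)) : ℝ :=
  ∑ T, shapW n (#T - #(S ∩ T)) #S ^ 2 / lev n T

lemma varFin_msr_le {n m : ℕ} (hm : m ≠ 0) (S : Finset (Fin n)) (ν : Finset (Fin n) → ℝ) :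
    varFin (lev n) (msr m ν (shapW n) S (lev n)) ≤ supNorm ν ^ 2 * msrWeightMoment n S / m := by
  refine (varFin_mean_le (sum_lev n) hm fun T =>
    ν T * (-1) ^ (#S - #(S ∩ T)) * shapW n (#T - #(S ∩ T)) #S / lev n T).trans
    (div_le_div_of_nonneg_right ?_ m.cast_nonneg)
  rw [msrWeightMoment, mul_sum]
  refine sum_le_sum fun T _ => ?_
  have hsign : ((-1 : ℝ) ^ (#S - #(S ∩ T))) ^ 2 = 1 := by
    rw [← pow_mul, mul_comm, pow_mul, neg_one_sq, one_pow]
  calc lev n T * (ν T * (-1) ^ (#S - #(S ∩ T)) * shapW n (#T - #(S ∩ T)) #S / lev n T) ^ 2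
      = ν T ^ 2 * (shapW n (#T - #(S ∩ T)) #S ^ 2 / lev n T) := by
        field_simp
        rw [hsign, mul_one]
    _ ≤ supNorm ν ^ 2 * (shapW n (#T - #(S ∩ T)) #S ^ 2 / lev n T) :=
        mul_le_mul_of_nonneg_right (sq_le_supNorm_sq ν T) (div_nonneg (sq_nonneg _) (lev_pos T).le)

lemma msrWeightMoment_eq {n s : ℕ} {S : Finset (Fin n)} (hS : #S = s) :
    msrWeightMoment n S = ∑ k ∈ range (s + 1), (s.choose k : ℝ) * ∑ j ∈ range (n - s + 1),
      ((n - s).choose j : ℝ) * (shapW n j s ^ 2 * (((n + 1 : ℕ) : ℝ) * n.choose (k + j))) := by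
  have hterm (T : Finset (Fin n)) : shapW n (#T - #(S ∩ T)) #S ^ 2 / lev n T
      = shapW n #(T \ S) s ^ 2 * (((n + 1 : ℕ) : ℝ) * n.choose (#(S ∩ T) + #(T \ S))) := by
    rw [← card_sdiff, hS, inter_comm, card_inter_add_card_sdiff, lev, one_div, div_inv_eq_mul]
  have hcompl : #Sᶜ = n - s := by rw [card_compl, Fintype.card_fin, hS]
  simp only [msrWeightMoment, hterm]
  rw [sum_apply_card_inter_card_sdiff S
    fun k j => shapW n j s ^ 2 * (((n + 1 : ℕ) : ℝ) * n.choose (k + j))]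
  simp only [hS, hcompl, nsmul_eq_mul]

lemma choose_mul_shapW_sq_mul_le {n s k j : ℕ} (hs : s ≤ n) (hk : k ≤ s) (hj : j ≤ n - s) :
    ((n - s).choose j : ℝ) * (shapW n j s ^ 2 * (((n + 1 : ℕ) : ℝ) * n.choose (k + j)))
      ≤ ((n + 1 : ℕ) : ℝ) * n ^ s / ((n - s + 1 : ℕ) : ℝ) ^ 2
        * (1 / (((j + 1 : ℕ) : ℝ) ^ k * ((n - s - j + 1 : ℕ) : ℝ) ^ (s - k))) := by
  have hchoose : (0 : ℝ) < (n - s).choose j := by exact_mod_cast Nat.choose_pos hj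
  have hcomb : (n.choose (k + j) : ℝ)
      * (((j + 1 : ℕ) : ℝ) ^ k * ((n - s - j + 1 : ℕ) : ℝ) ^ (s - k)) ≤ n ^ s * (n - s).choose j := by
    exact_mod_cast Nat.choose_add_mul_pow_mul_pow_le hs hk hj
  calc ((n - s).choose j : ℝ) * (shapW n j s ^ 2 * (((n + 1 : ℕ) : ℝ) * n.choose (k + j)))
      = ((n + 1 : ℕ) : ℝ) / ((n - s + 1 : ℕ) : ℝ) ^ 2
          * (n.choose (k + j) / (n - s).choose j) := by
        unfold shapW
        field_simp
    _ ≤ ((n + 1 : ℕ) : ℝ) / ((n - s + 1 : ℕ) : ℝ) ^ 2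
          * (n ^ s / (((j + 1 : ℕ) : ℝ) ^ k * ((n - s - j + 1 : ℕ) : ℝ) ^ (s - k))) := by
        refine mul_le_mul_of_nonneg_left ?_ (by positivity)
        rw [div_le_div_iff₀ hchoose (by positivity)]
        exact hcomb
    _ = _ := by ring

lemma msrWeightMoment_le {n s : ℕ} {S : Finset (Fin n)} (hS : #S = s) {K : ℝ}
    (hK : ∀ k ≤ s, ∑ j ∈ range (n - s + 1),
      1 / (((j + 1 : ℕ) : ℝ) ^ k * ((n - s - j + 1 : ℕ) : ℝ) ^ (s - k)) ≤ K) :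
    msrWeightMoment n S ≤ 2 ^ s * (((n + 1 : ℕ) : ℝ) * n ^ s / ((n - s + 1 : ℕ) : ℝ) ^ 2 * K) := by
  have hs : s ≤ n := hS ▸ (card_le_univ S).trans_eq (Fintype.card_fin n)
  set A := ((n + 1 : ℕ) : ℝ) * n ^ s / ((n - s + 1 : ℕ) : ℝ) ^ 2
  rw [msrWeightMoment_eq hS]
  calc _ ≤ ∑ k ∈ range (s + 1), (s.choose k : ℝ) * (A * K) := by
        gcongr with k hk
        have hks : k ≤ s := Nat.lt_succ_iff.1 (mem_range.1 hk)
        calc _ ≤ ∑ j ∈ range (n - s + 1),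
              A * (1 / (((j + 1 : ℕ) : ℝ) ^ k * ((n - s - j + 1 : ℕ) : ℝ) ^ (s - k))) :=
              sum_le_sum fun j hj =>
                choose_mul_shapW_sq_mul_le hs hks (Nat.lt_succ_iff.1 (mem_range.1 hj))
          _ ≤ A * K := by
              rw [← mul_sum]
              exact mul_le_mul_of_nonneg_left (hK k hks) (by positivity)
    _ = 2 ^ s * (A * K) := by
        rw [← sum_mul, ← Nat.cast_sum, Nat.sum_range_choose]
        push_cast
        ring

lemma succ_mul_pow_div_sq_le {n s : ℕ} (hs : 1 ≤ s) (hsn : s ≤ n) :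
    ((n + 1 : ℕ) : ℝ) * n ^ s / ((n - s + 1 : ℕ) : ℝ) ^ 2 ≤ 2 * s ^ 2 * n ^ (s - 1) := by
  have hn : n ≤ s * (n - s + 1) := by
    obtain ⟨d, rfl⟩ := Nat.exists_eq_add_of_le hsn
    rw [Nat.add_sub_cancel_left]
    nlinarith
  have hn' : (n : ℝ) ≤ s * ((n - s + 1 : ℕ) : ℝ) := by exact_mod_cast hn
  have hsucc : ((n + 1 : ℕ) : ℝ) ≤ 2 * n := by exact_mod_cast (by omega : n + 1 ≤ 2 * n)
  rw [div_le_iff₀ (by positivity), ← pow_sub_one_mul (by omega : s ≠ 0)]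
  calc ((n + 1 : ℕ) : ℝ) * (n ^ (s - 1) * n) ≤ 2 * n * (n ^ (s - 1) * n) := by gcongr
    _ = 2 * n ^ (s - 1) * (n * n) := by ring
    _ ≤ 2 * n ^ (s - 1) * ((s * ((n - s + 1 : ℕ) : ℝ)) * (s * ((n - s + 1 : ℕ) : ℝ))) := by
        gcongr
    _ = _ := by ring

lemma msrWeightMoment_le_of_card_eq_one {n : ℕ} {S : Finset (Fin n)} (hS : #S = 1) (hn : 2 ≤ n) :
    msrWeightMoment n S ≤ 16 * Real.log n := by
  have hK (k : ℕ) (hk : k ≤ 1) : ∑ j ∈ range (n - 1 + 1),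
      1 / (((j + 1 : ℕ) : ℝ) ^ k * ((n - 1 - j + 1 : ℕ) : ℝ) ^ (1 - k)) ≤ 1 + Real.log n := by
    simpa [Nat.sub_add_cancel (by omega : 1 ≤ n)]
      using sum_one_div_pow_mul_pow_le_one_add_log (n - 1) (k := k) (r := 1 - k) (by omega)
  have hlog : 1 / 2 < Real.log n := by
    have := Real.log_le_log (by norm_num) (by exact_mod_cast hn : (2 : ℝ) ≤ n)
    linarith [Real.log_two_gt_d9]
  calc msrWeightMoment n S ≤ 2 ^ 1 * (((n + 1 : ℕ) : ℝ) * n ^ 1 / ((n - 1 + 1 : ℕ) : ℝ) ^ 2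
        * (1 + Real.log n)) := msrWeightMoment_le hS hK
    _ ≤ 2 ^ 1 * (2 * 1 ^ 2 * n ^ (1 - 1) * (1 + Real.log n)) := by
        gcongr
        exact_mod_cast succ_mul_pow_div_sq_le le_rfl (by omega : 1 ≤ n)
    _ ≤ 16 * Real.log n := by norm_num; linarith

lemma msrWeightMoment_le_of_two_le_card {n s : ℕ} {S : Finset (Fin n)} (hS : #S = s) (hs : 2 ≤ s) :
    msrWeightMoment n S ≤ 2 ^ (s + 3) * s ^ 2 * n ^ (s - 1) := by
  have hsn : s ≤ n := hS ▸ (card_le_univ S).trans_eq (Fintype.card_fin n)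
  calc msrWeightMoment n S ≤ 2 ^ s * (((n + 1 : ℕ) : ℝ) * n ^ s / ((n - s + 1 : ℕ) : ℝ) ^ 2 * 4) :=
        msrWeightMoment_le hS fun k hk =>
          sum_one_div_pow_mul_pow_le_four (n - s) (by omega)
    _ ≤ 2 ^ s * (2 * s ^ 2 * n ^ (s - 1) * 4) := by
        gcongr
        exact succ_mul_pow_div_sq_le (by omega) hsn
    _ = 2 ^ (s + 3) * s ^ 2 * n ^ (s - 1) := by ring

theorem msr_shapley_leverage_variance_bound_general (s : ℕ) :
    ∃ C : ℝ, ∀ n : ℕ, max s 2 ≤ n →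
      ∀ S : Finset (Fin n), S.card = s →
        ∀ ν : Finset (Fin n) → ℝ, ∀ m : ℕ, 1 ≤ m →
          (s = 1 →
            varFin (lev n) (msr m ν (shapW n) S (lev n))
              ≤ C * supNorm ν ^ 2 * Real.log n / m) ∧
          (2 ≤ s →
            varFin (lev n) (msr m ν (shapW n) S (lev n))
              ≤ C * supNorm ν ^ 2 * (n : ℝ) ^ (s - 1) / m) := by
  refine ⟨2 ^ (s + 3) * s ^ 2, fun n hn S hS ν m hm => ⟨fun hs₁ => ?_, fun hs₂ => ?_⟩⟩
  · subst hs₁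
    calc _ ≤ supNorm ν ^ 2 * msrWeightMoment n S / m := varFin_msr_le (by omega) S ν
      _ ≤ supNorm ν ^ 2 * (16 * Real.log n) / m := by
          gcongr
          exact msrWeightMoment_le_of_card_eq_one hS (le_of_max_le_right hn)
      _ = _ := by ring
  · calc _ ≤ supNorm ν ^ 2 * msrWeightMoment n S / m := varFin_msr_le (by omega) S ν
      _ ≤ supNorm ν ^ 2 * (2 ^ (s + 3) * s ^ 2 * n ^ (s - 1)) / m := by
          gcongr
          exact msrWeightMoment_le_of_two_le_card hS hs₂
      _ = _ := by ring

/-- Variance growth of the MSR estimator of the Shapley interaction index under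
leverage sampling: for fixed `s ≥ 1` there is a constant `C` (depending only on `s`)
with `Var[φ̂_S] ≤ C ‖ν‖_∞² log(n)/m` for `s = 1` and
`Var[φ̂_S] ≤ C ‖ν‖_∞² n^{s−1}/m` for `s ≥ 2`. -/
theorem msr_shapley_leverage_variance_bound (s : ℕ) (hs : 1 ≤ s) :
    ∃ C : ℝ, ∀ n : ℕ, max s 2 ≤ n →
      ∀ S : Finset (Fin n), S.card = s →
        ∀ ν : Finset (Fin n) → ℝ, ∀ m : ℕ, 1 ≤ m →
          (s = 1 →
            varFin (lev n) (msr m ν (shapW n) S (lev n))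
              ≤ C * supNorm ν ^ 2 * Real.log n / m) ∧
          (2 ≤ s →
            varFin (lev n) (msr m ν (shapW n) S (lev n))
              ≤ C * supNorm ν ^ 2 * (n : ℝ) ^ (s - 1) / m) :=
  msr_shapley_leverage_variance_bound_general s
end
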